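/- Let d ≥ 2 be a real number. For every real ν > 0 and every real α ≥ 0, g₁(ν,α,d) ≤ g₂(ν,d), where g₁(ν,α,d) := (ν + 1 + (d−1)·α·ν)·exp(−(ν² + (d−1)·α²)/2) and g₂(ν,d) := ((ν + 1 + √(h₁(ν,d)))/2)·exp(−ν²/2 + h₂(ν,d)). -/

import Mathlib

/-- `h₁(ν,d) = (ν+1)² + 4ν²(d−1)`. -/
noncomputable def h1 (ν d : ℝ) : ℝ := (ν + 1) ^ 2 + 4 * ν ^ 2 * (d - 1)

/-- `h₂(ν,d) = ((ν+1)·√(h₁(ν,d)) − (ν+1)²)/(4ν²(d−1)) − 1/2`. -/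
noncomputable def h2 (ν d : ℝ) : ℝ :=
  ((ν + 1) * Real.sqrt (h1 ν d) - (ν + 1) ^ 2) / (4 * ν ^ 2 * (d - 1)) - 1 / 2

/-- `g₁(ν,α,d) = (ν + 1 + (d−1)·α·ν)·exp(−(ν² + (d−1)·α²)/2)`. -/
noncomputable def g1 (ν α d : ℝ) : ℝ :=
  (ν + 1 + (d - 1) * α * ν) * Real.exp (-(ν ^ 2 + (d - 1) * α ^ 2) / 2)

/-- `g₂(ν,d) = ((ν + 1 + √(h₁(ν,d)))/2)·exp(−ν²/2 + h₂(ν,d))`. -/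
noncomputable def g2 (ν d : ℝ) : ℝ :=
  ((ν + 1 + Real.sqrt (h1 ν d)) / 2) * Real.exp (-ν ^ 2 / 2 + h2 ν d)

/-!
Write `c = d − 1 > 0` and `B = ν + 1 + cβν` for a critical point `β = α*` of `g₁(ν,·,d)`,
i.e. `ν = βB`. Then `ν + 1 + cαν = B·(1 + cβ(α − β))`, and `1 + x ≤ eˣ` together with
`cβ(α − β) ≤ c(α² − β²)/2` (a rearrangement of `c(α − β)² ≥ 0`) gives `g₁(ν,α,d) ≤ g₁(ν,β,d)`
for every real `α`. Finally `α*` is the positive root of `cνβ² + (ν+1)β − ν = 0`, and substituting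
it turns `g₁(ν,α*,d)` into `g₂(ν,d)`.
-/

theorem g1_le_g1_of_stationary {ν α β d : ℝ} (hd : 1 < d)
    (hB : 0 ≤ ν + 1 + (d - 1) * β * ν)
    (hstat : ν = β * (ν + 1 + (d - 1) * β * ν)) :
    g1 ν α d ≤ g1 ν β d := by
  set B := ν + 1 + (d - 1) * β * ν
  set x := (d - 1) * β * (α - β)
  have hfactor : ν + 1 + (d - 1) * α * ν = B * (1 + x) := by
    linear_combination (d - 1) * (α - β) * hstat
  have hx : x ≤ (d - 1) * (α ^ 2 - β ^ 2) / 2 := by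
    nlinarith [mul_nonneg (sub_pos.2 hd).le (sq_nonneg (α - β))]
  calc g1 ν α d
      = B * (1 + x) * Real.exp (-(ν ^ 2 + (d - 1) * α ^ 2) / 2) := by rw [g1, hfactor]
    _ ≤ B * Real.exp ((d - 1) * (α ^ 2 - β ^ 2) / 2)
          * Real.exp (-(ν ^ 2 + (d - 1) * α ^ 2) / 2) := by
        gcongr
        linarith [Real.add_one_le_exp x, Real.exp_le_exp.2 hx]
    _ = g1 ν β d := by
        rw [g1, mul_assoc, ← Real.exp_add]
        congr 2
        ring

noncomputable def alphaStar (ν d : ℝ) : ℝ :=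
  (-(ν + 1) + Real.sqrt (h1 ν d)) / (2 * ν * (d - 1))

section alphaStar

variable {ν d : ℝ}

theorem h1_nonneg (hν : 0 < ν) (hd : 1 < d) : 0 ≤ h1 ν d := by
  unfold h1
  have : 0 < d - 1 := sub_pos.2 hd
  positivity

theorem sq_sqrt_h1 (hν : 0 < ν) (hd : 1 < d) :
    Real.sqrt (h1 ν d) ^ 2 = (ν + 1) ^ 2 + 4 * ν ^ 2 * (d - 1) := by
  rw [Real.sq_sqrt (h1_nonneg hν hd), h1]

theorem mul_alphaStar (hν : 0 < ν) (hd : 1 < d) :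
    (d - 1) * alphaStar ν d * (2 * ν) = Real.sqrt (h1 ν d) - (ν + 1) := by
  have : d - 1 ≠ 0 := (sub_pos.2 hd).ne'
  rw [alphaStar]
  field_simp
  ring

theorem add_mul_alphaStar (hν : 0 < ν) (hd : 1 < d) :
    ν + 1 + (d - 1) * alphaStar ν d * ν = (ν + 1 + Real.sqrt (h1 ν d)) / 2 := by
  linear_combination mul_alphaStar hν hd / 2

theorem alphaStar_stationary (hν : 0 < ν) (hd : 1 < d) :
    ν = alphaStar ν d * (ν + 1 + (d - 1) * alphaStar ν d * ν) := by
  have : d - 1 ≠ 0 := (sub_pos.2 hd).ne'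
  rw [add_mul_alphaStar hν hd, alphaStar]
  field_simp
  linear_combination -sq_sqrt_h1 hν hd

theorem h2_eq_alphaStar (hν : 0 < ν) (hd : 1 < d) :
    h2 ν d = -((d - 1) * alphaStar ν d ^ 2) / 2 := by
  have : d - 1 ≠ 0 := (sub_pos.2 hd).ne'
  rw [h2, alphaStar]
  field_simp
  linear_combination 4 * sq_sqrt_h1 hν hd

theorem g1_alphaStar (hν : 0 < ν) (hd : 1 < d) : g1 ν (alphaStar ν d) d = g2 ν d := by
  rw [g1, g2, add_mul_alphaStar hν hd, h2_eq_alphaStar hν hd]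
  ring_nf

end alphaStar

theorem stmt_6_general (d : ℝ) (hd : 2 ≤ d) (ν : ℝ) (hν : 0 < ν) (α : ℝ) :
    g1 ν α d ≤ g2 ν d := by
  have hd₁ : 1 < d := by linarith
  have hB : 0 ≤ ν + 1 + (d - 1) * alphaStar ν d * ν := by
    rw [add_mul_alphaStar hν hd₁]
    positivity
  rw [← g1_alphaStar hν hd₁]
  exact g1_le_g1_of_stationary hd₁ hB (alphaStar_stationary hν hd₁)

/-- For real `d ≥ 2`, every `ν > 0` and every `α ≥ 0`, `g₁(ν,α,d) ≤ g₂(ν,d)`. -/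
theorem stmt_6 (d : ℝ) (hd : 2 ≤ d) (ν : ℝ) (hν : 0 < ν) (α : ℝ) (hα : 0 ≤ α) :
    g1 ν α d ≤ g2 ν d :=
  stmt_6_general d hd ν hν α
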